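/- Let U : ℝ³ → ℝ be differentiable with gradient ∇U, and let x : I → ℝ³ be differentiable on an interval I satisfying the gradient-projection flow ẋ(t) = x(t) × (x(t) × ∇U(x(t))). Then for all t ∈ I, the derivative of t ↦ U(x(t)) equals −‖x(t) × ∇U(x(t))‖² ≤ 0; in particular, t ↦ U(x(t)) is nonincreasing along the flow. -/

import Mathlib

/-!
By the chain rule, `d/dt U(x) = ⟪∇U(x), x × (x × ∇U(x))⟫`, and cyclically permuting the triple
product turns this into `-‖x × ∇U(x)‖²`. A nonpositive derivative on an interval makes
`U ∘ x` antitone there by the mean value theorem.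
-/

open Matrix WithLp
open scoped RealInnerProductSpace

noncomputable def cross3 (a b : EuclideanSpace ℝ (Fin 3)) : EuclideanSpace ℝ (Fin 3) :=
  (WithLp.equiv 2 (Fin 3 → ℝ)).symm
    (crossProduct ((WithLp.equiv 2 (Fin 3 → ℝ)) a) ((WithLp.equiv 2 (Fin 3 → ℝ)) b))

theorem HasGradientAt.comp_hasDerivAt {F : Type*} [NormedAddCommGroup F] [InnerProductSpace ℝ F]
    [CompleteSpace F] {f : F → ℝ} {f' : F} {γ : ℝ → F} {γ' : F} {t : ℝ}
    (hf : HasGradientAt f f' (γ t)) (hγ : HasDerivAt γ γ' t) :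
    HasDerivAt (f ∘ γ) ⟪f', γ'⟫ t := by
  simpa only [InnerProductSpace.toDual_apply_apply] using
    (hasGradientAt_iff_hasFDerivAt.mp hf).comp_hasDerivAt t hγ

theorem Set.OrdConnected.antitoneOn_of_hasDerivAt_nonpos {D : Set ℝ} (hD : D.OrdConnected)
    {f f' : ℝ → ℝ} (hf : ∀ t ∈ D, HasDerivAt f (f' t) t) (hf' : ∀ t ∈ D, f' t ≤ 0) :
    AntitoneOn f D :=
  antitoneOn_of_hasDerivWithinAt_nonpos hD.convex
    (fun t ht => (hf t ht).continuousAt.continuousWithinAt)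
    (fun t ht => (hf t (interior_subset ht)).hasDerivWithinAt)
    (fun t ht => hf' t (interior_subset ht))

theorem inner_cross3 (u v w : EuclideanSpace ℝ (Fin 3)) :
    ⟪u, cross3 v w⟫ = ofLp u ⬝ᵥ ofLp v ⨯₃ ofLp w := by
  simp [cross3, EuclideanSpace.inner_eq_star_dotProduct, dotProduct_comm]

theorem inner_cross3_cross3_self (a g : EuclideanSpace ℝ (Fin 3)) :
    ⟪g, cross3 a (cross3 a g)⟫ = -‖cross3 a g‖ ^ 2 := by
  set c := cross3 a g
  calc ⟪g, cross3 a c⟫ = ofLp c ⬝ᵥ ofLp g ⨯₃ ofLp a := by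
        rw [inner_cross3, triple_product_permutation, triple_product_permutation]
    _ = -⟪c, c⟫ := by
        rw [← cross_anticomm, dotProduct_neg, ← inner_cross3]
    _ = -‖c‖ ^ 2 := by rw [real_inner_self_eq_norm_sq]

/-- along the gradient-projection flow
`ẋ = x × (x × ∇U(x))` the potential `U` decreases: the derivative of
`t ↦ U(x(t))` equals `−‖x(t) × ∇U(x(t))‖² ≤ 0` on the interval `I`, so
`t ↦ U(x(t))` is nonincreasing along the flow. -/
theorem potential_nonincreasing_along_flow
    (U : EuclideanSpace ℝ (Fin 3) → ℝ)
    (gradU : EuclideanSpace ℝ (Fin 3) → EuclideanSpace ℝ (Fin 3))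
    (hU : ∀ p, HasGradientAt U (gradU p) p)
    (I : Set ℝ) (hI : I.OrdConnected)
    (x : ℝ → EuclideanSpace ℝ (Fin 3))
    (hx : ∀ t ∈ I, HasDerivAt x (cross3 (x t) (cross3 (x t) (gradU (x t)))) t) :
    (∀ t ∈ I,
        HasDerivAt (fun τ => U (x τ)) (-‖cross3 (x t) (gradU (x t))‖ ^ 2) t ∧
          -‖cross3 (x t) (gradU (x t))‖ ^ 2 ≤ 0) ∧
      AntitoneOn (fun t => U (x t)) I := by
  have hderiv : ∀ t ∈ I,
      HasDerivAt (fun τ => U (x τ)) (-‖cross3 (x t) (gradU (x t))‖ ^ 2) t := fun t ht => by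
    have h := (hU (x t)).comp_hasDerivAt (hx t ht)
    rwa [inner_cross3_cross3_self] at h
  have hnonpos : ∀ t ∈ I, -‖cross3 (x t) (gradU (x t))‖ ^ 2 ≤ 0 :=
    fun t _ => neg_nonpos.mpr (sq_nonneg _)
  exact ⟨fun t ht => ⟨hderiv t ht, hnonpos t ht⟩,
    hI.antitoneOn_of_hasDerivAt_nonpos hderiv hnonpos⟩
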